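/- arXiv:1204.3693 — 5 statements merged into one kernel-verified Lean document; each statement's English description precedes it below -/
import Mathlib

section
/- If a Hermitian sesquilinear form [·|·] on SV satisfies [c(v)ψ | φ] = [ψ | a(v)φ] for all v ∈ V and φ, ψ ∈ SV, then [·|·] = [1|1]·⟨·|·⟩, i.e. it is a scalar multiple of the canonical inner product on SV. -/
open scoped ComplexConjugate

noncomputable section

section Defs

variable {V W A : Type} [AddCommGroup V] [Module ℂ V] [CommRing A] [Algebra ℂ A]

/-- `A` (with embedding `ι`) is the symmetric algebra of `V`: universal property. -/
def IsSymmAlg (ι : V →ₗ[ℂ] A) : Prop :=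
  ∀ (B : Type) [CommRing B] [Algebra ℂ B] (f : V →ₗ[ℂ] B),
    ∃! F : A →ₐ[ℂ] B, ∀ v, F (ι v) = f v

/-- The span of `n`-fold products of generators: the degree-`n` part. -/
def GradeOf (gen : W → A) (n : ℕ) : Submodule ℂ A :=
  Submodule.span ℂ {a | ∃ f : Fin n → W, a = ∏ i, gen (f i)}

/-- The algebra is spanned by products of generators. -/
def SpanProdsOf (gen : W → A) : Prop :=
  ∀ x : A, x ∈ Submodule.span ℂ {a | ∃ (n : ℕ) (f : Fin n → W), a = ∏ i, gen (f i)}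

/-- A quadratic: an antilinear functional concentrated in degree 2. -/
def IsQuadOf (gen : W → A) (ζ : A →ₗ⋆[ℂ] ℂ) : Prop :=
  ∀ n : ℕ, n ≠ 2 → ∀ φ ∈ GradeOf gen n, ζ φ = 0

/-- The commutative product on the full antidual induced by the coproduct,
characterized on products of generators. -/
def IsConvProdOf (gen : W → A)
    (mul : (A →ₗ⋆[ℂ] ℂ) → (A →ₗ⋆[ℂ] ℂ) → (A →ₗ⋆[ℂ] ℂ)) : Prop :=
  ∀ (Φ Ψ : A →ₗ⋆[ℂ] ℂ) (n : ℕ) (v : Fin n → W),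
    mul Φ Ψ (∏ i, gen (v i)) =
      ∑ S : Finset (Fin n), Φ (∏ i ∈ S, gen (v i)) * Ψ (∏ i ∈ Sᶜ, gen (v i))

/-- The counit (unit of the antidual algebra): kills products of at least one generator. -/
def IsCounitOf (gen : W → A) (ε : A →ₗ⋆[ℂ] ℂ) : Prop :=
  ∀ (n : ℕ) (v : Fin n → W), ε (∏ i, gen (v i)) = if n = 0 then 1 else 0

/-- Powers of a functional with respect to the convolution product. -/
def powD (mul : (A →ₗ⋆[ℂ] ℂ) → (A →ₗ⋆[ℂ] ℂ) → (A →ₗ⋆[ℂ] ℂ))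
    (ε ζ : A →ₗ⋆[ℂ] ℂ) : ℕ → (A →ₗ⋆[ℂ] ℂ)
  | 0 => ε
  | n + 1 => mul ζ (powD mul ε ζ n)

/-- `E` is the Gaussian `exp ζ = Σ ζⁿ/n!` (a finite sum in each degree). -/
def IsGaussianOf (gen : W → A)
    (mul : (A →ₗ⋆[ℂ] ℂ) → (A →ₗ⋆[ℂ] ℂ) → (A →ₗ⋆[ℂ] ℂ))
    (ε ζ E : A →ₗ⋆[ℂ] ℂ) : Prop :=
  ∀ k : ℕ, ∀ ψ ∈ GradeOf gen k,
    E ψ = ∑ n ∈ Finset.range (k + 1), ((n.factorial : ℂ))⁻¹ * powD mul ε ζ n ψ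

end Defs

section Defs2

variable {V A : Type} [NormedAddCommGroup V] [InnerProductSpace ℂ V]
  [CommRing A] [Algebra ℂ A]

/-- The family of annihilation operators: derivations killing `1` with
`a v (ι w) = ⟨v|w⟩ 1`. -/
def IsAnn (ι : V →ₗ[ℂ] A) (a : V → A →ₗ[ℂ] A) : Prop :=
  ∀ v : V, (∀ x y : A, a v (x * y) = a v x * y + x * a v y) ∧
    a v 1 = 0 ∧ ∀ w : V, a v (ι w) = (inner ℂ v w : ℂ) • (1 : A)

/-- The canonical inner product on the symmetric algebra: graded pieces are
orthogonal and the permanent formula holds. (Antilinear in the first slot.) -/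
def IsCanonInner (ι : V →ₗ[ℂ] A) (Bf : A →ₗ⋆[ℂ] A →ₗ[ℂ] ℂ) : Prop :=
  (∀ (k n : ℕ), k ≠ n → ∀ (x : Fin k → V) (y : Fin n → V),
      Bf (∏ i, ι (x i)) (∏ i, ι (y i)) = 0) ∧
  ∀ (n : ℕ) (x y : Fin n → V),
      Bf (∏ i, ι (x i)) (∏ i, ι (y i)) =
        ∑ p : Equiv.Perm (Fin n), ∏ i, (inner ℂ (x i) (y (p i)) : ℂ)

/-- Iterated annihilation `a(vₙ)⋯a(v₁)φ` (applying `a(v₁)` first). -/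
def iterAnn (a : V → A →ₗ[ℂ] A) : (n : ℕ) → (Fin n → V) → A → A
  | 0, _, φ => φ
  | n + 1, v, φ => a (v (Fin.last n)) (iterAnn a n (fun i => v i.castSucc) φ)

/-- A symmetric bi-antilinear map `V × V → ℂ`. -/
def IsSymAnti (Z : V → V → ℂ) : Prop :=
  (∀ x y, Z x y = Z y x) ∧
  (∀ x y y', Z x (y + y') = Z x y + Z x y') ∧
  (∀ (c : ℂ) (x y : V), Z x (c • y) = conj c * Z x y)

end Defs2

/-!
Moving a creation operator from the left slot of `[·|·]` to the right turns it into an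
annihilation operator, and `a(v)` acts on monomials by the Leibniz rule
`a(v)(y₀⋯yₘ) = Σⱼ ⟨v|yⱼ⟩ y₀⋯ŷⱼ⋯yₘ`. Hence
`[x₀x₁⋯xₖ | y₀⋯yₘ] = Σⱼ ⟨x₀|yⱼ⟩ [x₁⋯xₖ | y₀⋯ŷⱼ⋯yₘ]`, which is also the expansion along `x₀`
of the permanent defining `⟨x₀⋯xₖ|y₀⋯yₘ⟩`. Since `a(v)1 = 0` and `[·|·]` is Hermitian,
`[·|·]` vanishes between `1` and monomials of positive degree, so induction on the degree gives
`[·|·] = [1|1]⟨·|·⟩` on monomials, and monomials span `SV`.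
-/

open Equiv in
theorem Matrix.permanent_succ_column_zero {R : Type*} [CommSemiring R] {n : ℕ}
    (A : Matrix (Fin (n + 1)) (Fin (n + 1)) R) :
    A.permanent = ∑ i, A i 0 * (A.submatrix i.succAbove Fin.succ).permanent := by
  rw [permanent, ← Equiv.sum_comp Perm.decomposeFin.symm, Fintype.sum_prod_type]
  refine Finset.sum_congr rfl fun p _ => ?_
  simp only [Fin.prod_univ_succ, Perm.decomposeFin_symm_apply_zero,
    Perm.decomposeFin_symm_apply_succ, ← Finset.mul_sum]
  congr 1
  cases p using Fin.cases with
  | zero => simp [permanent]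
  | succ i =>
    rw [← permanent_permute_cols i.cycleRange]
    simp [permanent, Fin.succAbove_cycleRange]

section SymmetricAlgebra

variable {V A : Type} [NormedAddCommGroup V] [InnerProductSpace ℂ V] [CommRing A] [Algebra ℂ A]
  {ι : V →ₗ[ℂ] A}

theorem IsAnn.apply_prod_succ {a : V → A →ₗ[ℂ] A} (ha : IsAnn ι a) (v : V) {n : ℕ}
    (y : Fin (n + 1) → V) :
    a v (∏ i, ι (y i)) = ∑ j, (inner ℂ v (y j) : ℂ) • ∏ i, ι (y (j.succAbove i)) := by
  induction n with
  | zero => simp [(ha v).2.2]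
  | succ n ih =>
    rw [Fin.prod_univ_succ, (ha v).1, (ha v).2.2, ih, Fin.sum_univ_succ (n := n + 1),
      Finset.mul_sum]
    congr 1
    · rw [smul_mul_assoc, one_mul, Fin.succAbove_zero]
    · refine Finset.sum_congr rfl fun j _ => ?_
      rw [mul_smul_comm, Fin.prod_univ_succ (n := n), Fin.succ_succAbove_zero]
      simp only [Fin.succ_succAbove_succ]

namespace IsCanonInner

variable {Bf : A →ₗ⋆[ℂ] A →ₗ[ℂ] ℂ}

theorem apply_one_one (hB : IsCanonInner ι Bf) : Bf 1 1 = 1 := by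
  simpa using hB.2 0 ![] ![]

theorem apply_prod_eq_permanent (hB : IsCanonInner ι Bf) {n : ℕ} (x y : Fin n → V) :
    Bf (∏ i, ι (x i)) (∏ i, ι (y i)) =
      (Matrix.of fun j i => (inner ℂ (x i) (y j) : ℂ)).permanent :=
  hB.2 n x y

theorem apply_prod_succ (hB : IsCanonInner ι Bf) {k m : ℕ} (x : Fin (k + 1) → V)
    (y : Fin (m + 1) → V) :
    Bf (∏ i, ι (x i)) (∏ i, ι (y i)) =
      ∑ j, (inner ℂ (x 0) (y j) : ℂ) *
        Bf (∏ i : Fin k, ι (x i.succ)) (∏ i : Fin m, ι (y (j.succAbove i))) := by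
  rcases eq_or_ne k m with rfl | hkm
  · rw [hB.apply_prod_eq_permanent, Matrix.permanent_succ_column_zero]
    simp_rw [hB.apply_prod_eq_permanent]
    rfl
  · rw [hB.1 _ _ (by omega)]
    simp [hB.1 k m hkm]

end IsCanonInner

section AdjointForm

variable {a : V → A →ₗ[ℂ] A} {T : A →ₗ⋆[ℂ] A →ₗ[ℂ] ℂ}

theorem apply_ι_mul_one_eq_zero (hadj : ∀ (v : V) (φ ψ : A), T (ι v * ψ) φ = T ψ (a v φ))
    (ha : IsAnn ι a) (v : V) (ψ : A) : T (ι v * ψ) 1 = 0 := by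
  rw [hadj, (ha v).2.1, map_zero]

theorem apply_one_ι_mul_eq_zero (hadj : ∀ (v : V) (φ ψ : A), T (ι v * ψ) φ = T ψ (a v φ))
    (ha : IsAnn ι a) (hherm : ∀ φ ψ : A, T φ ψ = conj (T ψ φ))
    (v : V) (ψ : A) : T 1 (ι v * ψ) = 0 := by
  rw [hherm, apply_ι_mul_one_eq_zero hadj ha, map_zero]

theorem apply_prod_eq_mul_canonInner (hadj : ∀ (v : V) (φ ψ : A), T (ι v * ψ) φ = T ψ (a v φ))
    (ha : IsAnn ι a) {Bf : A →ₗ⋆[ℂ] A →ₗ[ℂ] ℂ}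
    (hB : IsCanonInner ι Bf) (hherm : ∀ φ ψ : A, T φ ψ = conj (T ψ φ))
    {k : ℕ} (x : Fin k → V) {n : ℕ} (y : Fin n → V) :
    T (∏ i, ι (x i)) (∏ i, ι (y i)) = T 1 1 * Bf (∏ i, ι (x i)) (∏ i, ι (y i)) := by
  induction k generalizing n with
  | zero =>
    cases n with
    | zero => simp [hB.apply_one_one]
    | succ m =>
      rw [hB.1 0 (m + 1) (by omega) x y, Fin.prod_univ_zero, Fin.prod_univ_succ,
        apply_one_ι_mul_eq_zero hadj ha hherm, mul_zero]
  | succ k ih =>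
    cases n with
    | zero =>
      rw [hB.1 (k + 1) 0 (by omega) x y, Fin.prod_univ_zero, Fin.prod_univ_succ,
        apply_ι_mul_one_eq_zero hadj ha, mul_zero]
    | succ m =>
      rw [hB.apply_prod_succ, Fin.prod_univ_succ, hadj, ha.apply_prod_succ, map_sum,
        Finset.mul_sum]
      refine Finset.sum_congr rfl fun j _ => ?_
      rw [map_smul, smul_eq_mul, ih, mul_left_comm]

end AdjointForm

end SymmetricAlgebra

theorem hermitian_form_proportional_general {V A : Type}
    [NormedAddCommGroup V] [InnerProductSpace ℂ V]
    [CommRing A] [Algebra ℂ A] (ι : V →ₗ[ℂ] A)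
    (hspan : SpanProdsOf fun w => ι w)
    (a : V → A →ₗ[ℂ] A) (ha : IsAnn ι a)
    (Bf : A →ₗ⋆[ℂ] A →ₗ[ℂ] ℂ) (hB : IsCanonInner ι Bf)
    (T : A →ₗ⋆[ℂ] A →ₗ[ℂ] ℂ)
    (hherm : ∀ φ ψ : A, T φ ψ = conj (T ψ φ))
    (hadj : ∀ (v : V) (φ ψ : A), T (ι v * ψ) φ = T ψ (a v φ)) :
    ∀ φ ψ : A, T ψ φ = T 1 1 * Bf ψ φ := by
  have hspan_top := Submodule.eq_top_iff'.2 hspan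
  have hT : T = T 1 1 • Bf := by
    refine LinearMap.ext_on hspan_top fun ψ ⟨k, x, hψ⟩ => ?_
    refine LinearMap.ext_on hspan_top fun φ ⟨n, y, hφ⟩ => ?_
    subst hψ hφ
    exact apply_prod_eq_mul_canonInner hadj ha hB hherm x y
  exact fun φ ψ => LinearMap.congr_fun₂ hT ψ φ

/-- A Hermitian sesquilinear form on `SV` for which creators and annihilators are
mutually adjoint is proportional to the canonical inner product:
`[·|·] = [1|1]·⟨·|·⟩`. -/
theorem hermitian_form_proportional {V A : Type}
    [NormedAddCommGroup V] [InnerProductSpace ℂ V]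
    [CommRing A] [Algebra ℂ A] (ι : V →ₗ[ℂ] A) (hA : IsSymmAlg ι)
    (hspan : SpanProdsOf fun w => ι w)
    (a : V → A →ₗ[ℂ] A) (ha : IsAnn ι a)
    (Bf : A →ₗ⋆[ℂ] A →ₗ[ℂ] ℂ) (hB : IsCanonInner ι Bf)
    (T : A →ₗ⋆[ℂ] A →ₗ[ℂ] ℂ)
    (hherm : ∀ φ ψ : A, T φ ψ = conj (T ψ φ))
    (hadj : ∀ (v : V) (φ ψ : A), T (ι v * ψ) φ = T ψ (a v φ)) :
    ∀ φ ψ : A, T ψ φ = T 1 1 * Bf ψ φ :=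
  hermitian_form_proportional_general ι hspan a ha Bf hB T hherm hadj
end
end

section
/- For a quadratic ζ ∈ S²V' with associated symmetric antilinear map Z, the Gaussian e^Z := Σₙ ζⁿ/n! ∈ SV' satisfies a(v)e^Z = (Zv)·e^Z for every v ∈ V, where the product on the right is the commutative product of SV' induced by the coproduct of SV. -/
open scoped ComplexConjugate

noncomputable section

/-! The annihilation operator `a(v)` acts on `SV'` as the transpose of multiplication by `ι v`;
since `ι v` is primitive for the coproduct, it is a derivation of the convolution product. It
kills the unit `ε` and sends `ζ` to `Zv`, so by commutativity `a(v) ζ^(m+1) = (m+1) (Zv) ζ^m`, and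
`a(v)` maps the partial sum `∑_{m ≤ N+1} ζ^m/m!` to `(Zv) · ∑_{m ≤ N} ζ^m/m!`. On products of at
most `N` generators these partial sums agree with `e^Z`, because `ζ^m` vanishes in degrees below
`2m`. -/

section

variable {W A : Type} [CommRing A] [Algebra ℂ A] {gen : W → A}
  {mul : (A →ₗ⋆[ℂ] ℂ) → (A →ₗ⋆[ℂ] ℂ) → (A →ₗ⋆[ℂ] ℂ)} {ε ζ E : A →ₗ⋆[ℂ] ℂ}

theorem Finset.exists_fin_embedding_map_univ {I : Type*} (s : Finset I) :
    ∃ (n : ℕ) (e : Fin n ↪ I), Finset.univ.map e = s :=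
  ⟨s.card, s.equivFin.symm.toEmbedding.trans (.subtype _), by
    ext x
    simpa using ⟨fun ⟨a, ha⟩ => ha ▸ (s.equivFin.symm a).2,
      fun hx => ⟨s.equivFin ⟨x, hx⟩, by simp⟩⟩⟩

theorem prod_mem_gradeOf {I : Type*} (s : Finset I) (w : I → W) :
    ∏ i ∈ s, gen (w i) ∈ GradeOf gen s.card := by
  obtain ⟨n, e, rfl⟩ := s.exists_fin_embedding_map_univ
  rw [Finset.prod_map, Finset.card_map, Finset.card_univ, Fintype.card_fin]
  exact Submodule.subset_span ⟨w ∘ e, rfl⟩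

theorem SpanProdsOf.ext (hspan : SpanProdsOf gen) {Φ Ψ : A →ₗ⋆[ℂ] ℂ}
    (h : ∀ (n : ℕ) (w : Fin n → W), Φ (∏ i, gen (w i)) = Ψ (∏ i, gen (w i))) : Φ = Ψ := by
  refine LinearMap.ext_on (s := {a | ∃ (n : ℕ) (w : Fin n → W), a = ∏ i, gen (w i)})
    (Submodule.eq_top_iff'.2 hspan) ?_
  rintro _ ⟨n, w, rfl⟩
  exact h n w

/-- The annihilation operator `a(v)` on `SV'` is the transpose of the creation operator, which
is multiplication by `ι v`. -/
def annihilation (x : A) : (A →ₗ⋆[ℂ] ℂ) →ₗ[ℂ] A →ₗ⋆[ℂ] ℂ where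
  toFun Φ := Φ.comp (LinearMap.mulLeft ℂ x)
  map_add' _ _ := rfl
  map_smul' _ _ := rfl

theorem annihilation_apply (x : A) (Φ : A →ₗ⋆[ℂ] ℂ) (ψ : A) :
    annihilation x Φ ψ = Φ (x * ψ) := rfl

namespace IsConvProdOf

theorem apply_prod_finset (hmul : IsConvProdOf gen mul) (Φ Ψ : A →ₗ⋆[ℂ] ℂ) {I : Type*}
    [DecidableEq I] (s : Finset I) (w : I → W) :
    mul Φ Ψ (∏ i ∈ s, gen (w i)) =
      ∑ t ∈ s.powerset, Φ (∏ i ∈ t, gen (w i)) * Ψ (∏ i ∈ s \ t, gen (w i)) := by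
  obtain ⟨n, e, rfl⟩ := s.exists_fin_embedding_map_univ
  rw [Finset.prod_map, show ∏ j, gen (w (e j)) = ∏ j, gen ((w ∘ e) j) from rfl, hmul Φ Ψ n,
    Finset.map_eq_image, Finset.powerset_image,
    Finset.sum_image (Finset.image_injective e.injective).injOn, Finset.powerset_univ]
  refine Finset.sum_congr rfl fun t _ => ?_
  rw [← Finset.map_eq_image, ← Finset.map_eq_image, ← Finset.map_sdiff,
    ← Finset.compl_eq_univ_sdiff, Finset.prod_map, Finset.prod_map]
  rfl

theorem apply_prod_finset_eq_sum_disjoint (hmul : IsConvProdOf gen mul) (Φ Ψ Θ : A →ₗ⋆[ℂ] ℂ)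
    {I : Type*} [DecidableEq I] (s : Finset I) (w : I → W) :
    mul Φ (mul Ψ Θ) (∏ i ∈ s, gen (w i)) =
      ∑ t ∈ s.powerset, ∑ u ∈ s.powerset, if Disjoint t u then
        Φ (∏ i ∈ t, gen (w i)) * Ψ (∏ i ∈ u, gen (w i)) * Θ (∏ i ∈ s \ (t ∪ u), gen (w i))
        else 0 := by
  rw [hmul.apply_prod_finset]
  refine Finset.sum_congr rfl fun t ht => ?_
  rw [hmul.apply_prod_finset, Finset.mul_sum, ← Finset.sum_filter]
  have hsub : (s \ t).powerset = s.powerset.filter (Disjoint t) := by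
    ext u
    simp [Finset.subset_sdiff, disjoint_comm]
  rw [← hsub]
  refine Finset.sum_congr rfl fun u _ => ?_
  rw [sdiff_sdiff_left, mul_assoc]
  rfl

theorem mul_left_comm (hspan : SpanProdsOf gen) (hmul : IsConvProdOf gen mul)
    (Φ Ψ Θ : A →ₗ⋆[ℂ] ℂ) : mul Φ (mul Ψ Θ) = mul Ψ (mul Φ Θ) :=
  hspan.ext fun n w => by
    rw [hmul.apply_prod_finset_eq_sum_disjoint, hmul.apply_prod_finset_eq_sum_disjoint,
      Finset.sum_comm]
    simp only [disjoint_comm, Finset.union_comm, mul_comm (Φ _)]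

def mulLeft (hspan : SpanProdsOf gen) (hmul : IsConvProdOf gen mul) (Φ : A →ₗ⋆[ℂ] ℂ) :
    (A →ₗ⋆[ℂ] ℂ) →ₗ[ℂ] A →ₗ⋆[ℂ] ℂ where
  toFun := mul Φ
  map_add' Ψ Θ := hspan.ext fun n w => by
    simp only [hmul _ _ n w, LinearMap.add_apply, mul_add, Finset.sum_add_distrib]
  map_smul' c Ψ := hspan.ext fun n w => by
    simp only [hmul _ _ n w, LinearMap.smul_apply, smul_eq_mul, Finset.mul_sum, RingHom.id_apply]
    exact Finset.sum_congr rfl fun _ _ => _root_.mul_left_comm _ _ _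

theorem mulLeft_apply (hspan : SpanProdsOf gen) (hmul : IsConvProdOf gen mul)
    (Φ Ψ : A →ₗ⋆[ℂ] ℂ) : mulLeft hspan hmul Φ Ψ = mul Φ Ψ := rfl

theorem mul_zero_right (hspan : SpanProdsOf gen) (hmul : IsConvProdOf gen mul)
    (Φ : A →ₗ⋆[ℂ] ℂ) : mul Φ 0 = 0 :=
  map_zero (mulLeft hspan hmul Φ)

theorem mul_smul_right (hspan : SpanProdsOf gen) (hmul : IsConvProdOf gen mul) (c : ℂ)
    (Φ Ψ : A →ₗ⋆[ℂ] ℂ) : mul Φ (c • Ψ) = c • mul Φ Ψ :=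
  map_smul (mulLeft hspan hmul Φ) c Ψ

theorem apply_gen_mul_prod_finset (hmul : IsConvProdOf gen mul) (Φ Ψ : A →ₗ⋆[ℂ] ℂ) {I : Type*}
    [DecidableEq I] {s : Finset I} {a : I} (ha : a ∉ s) (w : I → W) :
    mul Φ Ψ (gen (w a) * ∏ i ∈ s, gen (w i)) =
      mul (annihilation (gen (w a)) Φ) Ψ (∏ i ∈ s, gen (w i)) +
        mul Φ (annihilation (gen (w a)) Ψ) (∏ i ∈ s, gen (w i)) := by
  rw [← Finset.prod_insert ha (f := fun i => gen (w i)), hmul.apply_prod_finset,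
    Finset.sum_powerset_insert ha, hmul.apply_prod_finset, hmul.apply_prod_finset, add_comm]
  congr 1 <;> refine Finset.sum_congr rfl fun t ht => ?_
  · have hat : a ∉ t := fun h => ha (Finset.mem_powerset.1 ht h)
    rw [Finset.insert_sdiff_insert, Finset.sdiff_insert_of_notMem ha, Finset.prod_insert hat]
    rfl
  · have hat : a ∉ s \ t := fun h => ha (Finset.mem_sdiff.1 h).1
    rw [Finset.insert_sdiff_of_notMem _ fun h => ha (Finset.mem_powerset.1 ht h),
      Finset.prod_insert hat]
    rfl

theorem annihilation_mul (hspan : SpanProdsOf gen) (hmul : IsConvProdOf gen mul) (v : W)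
    (Φ Ψ : A →ₗ⋆[ℂ] ℂ) :
    annihilation (gen v) (mul Φ Ψ) =
      mul (annihilation (gen v) Φ) Ψ + mul Φ (annihilation (gen v) Ψ) :=
  hspan.ext fun n w => by
    simpa [annihilation_apply, Finset.prod_map] using hmul.apply_gen_mul_prod_finset Φ Ψ
      (s := Finset.univ.map .some) (a := none) (by simp) fun o => o.elim v w

end IsConvProdOf

theorem IsCounitOf.annihilation_eq_zero (hspan : SpanProdsOf gen) (hε : IsCounitOf gen ε)
    (v : W) : annihilation (gen v) ε = 0 :=
  hspan.ext fun n w => by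
    simpa [annihilation_apply, Fin.prod_univ_succ] using hε (n + 1) (Fin.cons v w)

theorem powD_zero (mul : (A →ₗ⋆[ℂ] ℂ) → (A →ₗ⋆[ℂ] ℂ) → (A →ₗ⋆[ℂ] ℂ)) (ε ζ : A →ₗ⋆[ℂ] ℂ) :
    powD mul ε ζ 0 = ε := rfl

theorem powD_succ (mul : (A →ₗ⋆[ℂ] ℂ) → (A →ₗ⋆[ℂ] ℂ) → (A →ₗ⋆[ℂ] ℂ)) (ε ζ : A →ₗ⋆[ℂ] ℂ)
    (m : ℕ) : powD mul ε ζ (m + 1) = mul ζ (powD mul ε ζ m) := rfl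

theorem powD_apply_prod_finset_eq_zero_of_card_lt (hmul : IsConvProdOf gen mul)
    (hζ : IsQuadOf gen ζ) {I : Type*} [DecidableEq I] (w : I → W) (m : ℕ) {s : Finset I}
    (hs : s.card < 2 * m) : powD mul ε ζ m (∏ i ∈ s, gen (w i)) = 0 := by
  induction m generalizing s with
  | zero => omega
  | succ m ih =>
    rw [powD_succ, hmul.apply_prod_finset]
    refine Finset.sum_eq_zero fun t ht => ?_
    by_cases ht2 : t.card = 2
    · have hts := Finset.mem_powerset.1 ht
      have hcard := Finset.card_le_card hts
      rw [ih (by rw [Finset.card_sdiff_of_subset hts]; omega), mul_zero]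
    · rw [hζ _ ht2 _ (prod_mem_gradeOf t w), zero_mul]

def expPartialSum (mul : (A →ₗ⋆[ℂ] ℂ) → (A →ₗ⋆[ℂ] ℂ) → (A →ₗ⋆[ℂ] ℂ)) (ε ζ : A →ₗ⋆[ℂ] ℂ)
    (N : ℕ) : A →ₗ⋆[ℂ] ℂ :=
  ∑ m ∈ Finset.range (N + 1), (m.factorial : ℂ)⁻¹ • powD mul ε ζ m

theorem IsGaussianOf.apply_prod_finset_eq_expPartialSum (hmul : IsConvProdOf gen mul)
    (hζ : IsQuadOf gen ζ) (hE : IsGaussianOf gen mul ε ζ E) {I : Type*} [DecidableEq I]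
    (s : Finset I) (w : I → W) {N : ℕ} (hN : s.card ≤ N) :
    E (∏ i ∈ s, gen (w i)) = expPartialSum mul ε ζ N (∏ i ∈ s, gen (w i)) := by
  rw [hE _ _ (prod_mem_gradeOf s w), expPartialSum, LinearMap.sum_apply]
  refine Finset.sum_subset (Finset.range_subset_range.2 (by omega)) fun m _ hm => ?_
  rw [Finset.mem_range, not_lt] at hm
  rw [powD_apply_prod_finset_eq_zero_of_card_lt hmul hζ w m (by omega), mul_zero]

theorem annihilation_powD_succ (hspan : SpanProdsOf gen) (hmul : IsConvProdOf gen mul)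
    (hε : IsCounitOf gen ε) (v : W) (m : ℕ) :
    annihilation (gen v) (powD mul ε ζ (m + 1)) =
      ((m + 1 : ℕ) : ℂ) • mul (annihilation (gen v) ζ) (powD mul ε ζ m) := by
  induction m with
  | zero =>
    rw [powD_succ, hmul.annihilation_mul hspan, powD_zero, hε.annihilation_eq_zero hspan,
      hmul.mul_zero_right hspan, add_zero, zero_add, Nat.cast_one, one_smul]
  | succ m ih =>
    rw [powD_succ, hmul.annihilation_mul hspan, ih, hmul.mul_smul_right hspan,
      hmul.mul_left_comm hspan, ← powD_succ mul ε ζ m,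
      Nat.cast_succ (m + 1), add_smul, one_smul, add_comm]

theorem annihilation_expPartialSum_succ (hspan : SpanProdsOf gen)
    (hmul : IsConvProdOf gen mul) (hε : IsCounitOf gen ε) (v : W) (N : ℕ) :
    annihilation (gen v) (expPartialSum mul ε ζ (N + 1)) =
      mul (annihilation (gen v) ζ) (expPartialSum mul ε ζ N) := by
  rw [expPartialSum, expPartialSum, map_sum, Finset.sum_range_succ', ← hmul.mulLeft_apply hspan,
    map_sum]
  simp only [map_smul, powD_zero, hε.annihilation_eq_zero hspan, smul_zero, add_zero]
  refine Finset.sum_congr rfl fun m _ => ?_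
  rw [annihilation_powD_succ hspan hmul hε, smul_smul, hmul.mulLeft_apply]
  congr 1
  rw [Nat.factorial_succ]
  push_cast
  field_simp

theorem IsGaussianOf.annihilation_eq (hspan : SpanProdsOf gen) (hmul : IsConvProdOf gen mul)
    (hε : IsCounitOf gen ε) (hζ : IsQuadOf gen ζ) (hE : IsGaussianOf gen mul ε ζ E) (v : W) :
    annihilation (gen v) E = mul (annihilation (gen v) ζ) E :=
  hspan.ext fun n w => by
    have hcons : gen v * ∏ i, gen (w i) = ∏ i, gen ((Fin.cons v w : Fin (n + 1) → W) i) := by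
      simp [Fin.prod_univ_succ]
    rw [annihilation_apply, hcons,
      hE.apply_prod_finset_eq_expPartialSum hmul hζ _ _ (N := n + 1) (by simp), ← hcons,
      ← annihilation_apply, annihilation_expPartialSum_succ hspan hmul hε,
      hmul _ _ n w, hmul _ _ n w]
    refine Finset.sum_congr rfl fun S _ => ?_
    rw [hE.apply_prod_finset_eq_expPartialSum hmul hζ Sᶜ w (N := n)
      ((Finset.card_le_univ _).trans (by simp))]

end

theorem gaussian_annihilation_general {V A : Type}
    [NormedAddCommGroup V] [InnerProductSpace ℂ V]
    [CommRing A] [Algebra ℂ A] (ι : V →ₗ[ℂ] A)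
    (hspan : SpanProdsOf fun w => ι w)
    (mul : (A →ₗ⋆[ℂ] ℂ) → (A →ₗ⋆[ℂ] ℂ) → (A →ₗ⋆[ℂ] ℂ))
    (hmul : IsConvProdOf (fun w => ι w) mul)
    (ε : A →ₗ⋆[ℂ] ℂ) (hε : IsCounitOf (fun w => ι w) ε)
    (ζ : A →ₗ⋆[ℂ] ℂ) (hζ : IsQuadOf (fun w => ι w) ζ)
    (zv : V → (A →ₗ⋆[ℂ] ℂ)) (hzv : ∀ v : V, ∀ ψ : A, zv v ψ = ζ (ι v * ψ))
    (E : A →ₗ⋆[ℂ] ℂ) (hE : IsGaussianOf (fun w => ι w) mul ε ζ E) :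
    ∀ (v : V) (ψ : A), E (ι v * ψ) = mul (zv v) E ψ := by
  intro v ψ
  have hzv_eq : zv v = annihilation (ι v) ζ := LinearMap.ext (hzv v)
  rw [hzv_eq]
  exact LinearMap.congr_fun (hE.annihilation_eq hspan hmul hε hζ v) ψ

/-- For a quadratic `ζ` with associated symmetric map `Z` (so `ζ(xy) = Z x y`),
the Gaussian `e^Z = Σ ζⁿ/n!` satisfies `a(v)e^Z = (Zv)·e^Z`, the product being the
convolution product of `SV'` induced by the coproduct of `SV`; here `Zv` is
regarded as the degree-one functional `a(v)ζ ∈ SV'`. -/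
theorem gaussian_annihilation {V A : Type}
    [NormedAddCommGroup V] [InnerProductSpace ℂ V]
    [CommRing A] [Algebra ℂ A] (ι : V →ₗ[ℂ] A) (hA : IsSymmAlg ι)
    (hspan : SpanProdsOf fun w => ι w)
    (mul : (A →ₗ⋆[ℂ] ℂ) → (A →ₗ⋆[ℂ] ℂ) → (A →ₗ⋆[ℂ] ℂ))
    (hmul : IsConvProdOf (fun w => ι w) mul)
    (ε : A →ₗ⋆[ℂ] ℂ) (hε : IsCounitOf (fun w => ι w) ε)
    (ζ : A →ₗ⋆[ℂ] ℂ) (hζ : IsQuadOf (fun w => ι w) ζ)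
    (Z : V → V → ℂ) (hZ : IsSymAnti Z) (hζZ : ∀ x y : V, ζ (ι x * ι y) = Z x y)
    (zv : V → (A →ₗ⋆[ℂ] ℂ)) (hzv : ∀ v : V, ∀ ψ : A, zv v ψ = ζ (ι v * ψ))
    (E : A →ₗ⋆[ℂ] ℂ) (hE : IsGaussianOf (fun w => ι w) mul ε ζ E) :
    ∀ (v : V) (ψ : A), E (ι v * ψ) = mul (zv v) E ψ :=
  gaussian_annihilation_general ι hspan mul hmul ε hε ζ hζ zv hzv E hE
end
end

section
/- The intersection of the kernels of all annihilation operators a(v), v ∈ V, acting on the full antidual SV', is the complex line spanned by the functional ⟨·|1⟩ (evaluation against the vacuum). -/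
open scoped ComplexConjugate

noncomputable section

/-!
Since `c(v)ψ = ι v * ψ`, a functional is killed by every `a(v)` iff it vanishes on all products of
at least one generator. Together with `1` these products span `SV`, so such a functional is
determined by its value at `1`, and `ε` is the one with value `1`.
-/

section Generators

variable {W A : Type} [CommRing A] [Algebra ℂ A] {gen : W → A}

theorem SpanProdsOf.span_eq_top (hspan : SpanProdsOf gen) :
    Submodule.span ℂ {a | ∃ (n : ℕ) (f : Fin n → W), a = ∏ i, gen (f i)} = ⊤ :=
  eq_top_iff.2 fun x _ => hspan x

theorem SpanProdsOf.semilinearMap_ext {R M : Type} [Semiring R] [AddCommMonoid M] [Module R M]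
    {σ : ℂ →+* R} (hspan : SpanProdsOf gen) {Φ Ψ : A →ₛₗ[σ] M}
    (h : ∀ (n : ℕ) (f : Fin n → W), Φ (∏ i, gen (f i)) = Ψ (∏ i, gen (f i))) : Φ = Ψ :=
  LinearMap.ext_on hspan.span_eq_top (by rintro _ ⟨n, f, rfl⟩; exact h n f)

variable {ε : A →ₗ⋆[ℂ] ℂ}

theorem IsCounitOf.map_one (hε : IsCounitOf gen ε) : ε 1 = 1 := by
  simpa using hε 0 Fin.elim0

theorem IsCounitOf.map_prod_succ (hε : IsCounitOf gen ε) {n : ℕ} (f : Fin (n + 1) → W) :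
    ε (∏ i, gen (f i)) = 0 := by
  simpa using hε (n + 1) f

theorem IsCounitOf.map_gen_mul (hε : IsCounitOf gen ε) (hspan : SpanProdsOf gen)
    (w : W) (ψ : A) : ε (gen w * ψ) = 0 := by
  suffices ε.comp (LinearMap.mulLeft ℂ (gen w)) = 0 from LinearMap.congr_fun this ψ
  refine hspan.semilinearMap_ext fun n f => ?_
  have hcons : gen w * ∏ i, gen (f i) = ∏ i, gen ((Fin.cons w f : Fin (n + 1) → W) i) := by
    simp [Fin.prod_univ_succ]
  simp only [LinearMap.comp_apply, LinearMap.mulLeft_apply, LinearMap.zero_apply, hcons,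
    hε.map_prod_succ]

theorem IsCounitOf.eq_map_one_smul (hε : IsCounitOf gen ε) (hspan : SpanProdsOf gen)
    {Φ : A →ₗ⋆[ℂ] ℂ} (hΦ : ∀ (w : W) (ψ : A), Φ (gen w * ψ) = 0) : Φ = Φ 1 • ε := by
  refine hspan.semilinearMap_ext fun n f => ?_
  rcases n with _ | n
  · simp [hε.map_one]
  · rw [LinearMap.smul_apply, hε.map_prod_succ, smul_zero, Fin.prod_univ_succ]
    exact hΦ (f 0) _

end Generators

theorem annihilator_kernel_vacuum_general {V A : Type}
    [NormedAddCommGroup V] [InnerProductSpace ℂ V]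
    [CommRing A] [Algebra ℂ A] (ι : V →ₗ[ℂ] A)
    (hspan : SpanProdsOf fun w => ι w)
    (ε : A →ₗ⋆[ℂ] ℂ) (hε : IsCounitOf (fun w => ι w) ε) :
    ∀ Φ : A →ₗ⋆[ℂ] ℂ,
      (∀ (v : V) (ψ : A), Φ (ι v * ψ) = 0) ↔ ∃ c : ℂ, Φ = c • ε := by
  intro Φ
  refine ⟨fun hΦ => ⟨Φ 1, hε.eq_map_one_smul hspan hΦ⟩, ?_⟩
  rintro ⟨c, rfl⟩ v ψ
  simp [hε.map_gen_mul hspan v ψ]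

/-- The intersection of the kernels of all annihilators `a(v)` on the full
antidual `SV'` is the complex line spanned by the vacuum functional `⟨·|1⟩`. -/
theorem annihilator_kernel_vacuum {V A : Type}
    [NormedAddCommGroup V] [InnerProductSpace ℂ V]
    [CommRing A] [Algebra ℂ A] (ι : V →ₗ[ℂ] A) (hA : IsSymmAlg ι)
    (hspan : SpanProdsOf fun w => ι w)
    (ε : A →ₗ⋆[ℂ] ℂ) (hε : IsCounitOf (fun w => ι w) ε) :
    ∀ Φ : A →ₗ⋆[ℂ] ℂ,
      (∀ (v : V) (ψ : A), Φ (ι v * ψ) = 0) ↔ ∃ c : ℂ, Φ = c • ε :=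
  annihilator_kernel_vacuum_general ι hspan ε hε
end
end

section
/- The assignment u ↦ U defined by [Uφ](ψ) = u(ψ₊φ₋) is a linear isomorphism from the full antidual S(V_ℂ)' onto the space Hom(SV, SV') of linear maps from the symmetric algebra SV to its full antidual. -/
/-! Products `(bᵢ)₊ (bⱼ)₋` of basis vectors of `SV` form a basis of `SV_ℂ`, so an antilinear
functional `u` is freely determined by the numbers `u((bᵢ)₊ (bⱼ)₋) = [U bⱼ](bᵢ)`, and these are
exactly the matrix entries that freely determine a linear map `SV → SV'`. -/

open scoped ComplexConjugate

noncomputable section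

section DefsC

variable {A AC : Type} [CommRing A] [Algebra ℂ A] [CommRing AC] [Algebra ℂ AC]

/-- An antilinear (conjugate-linear) algebra morphism, such as `φ ↦ φ₋`. -/
def IsAntiAlgHom (m : A → AC) : Prop :=
  (∀ x y : A, m (x + y) = m x + m y) ∧ (∀ (c : ℂ) (x : A), m (c • x) = conj c • m x) ∧
  (∀ x y : A, m (x * y) = m x * m y) ∧ m 1 = 1

end DefsC

namespace Module.Basis

variable {M I : Type} [AddCommGroup M] [Module ℂ M]

def antiConstr (b : Basis I ℂ M) (f : I → ℂ) : M →ₗ⋆[ℂ] ℂ :=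
  (starLinearEquiv ℂ : ℂ ≃ₗ⋆[ℂ] ℂ).toLinearMap ∘ₛₗ b.constr ℂ (fun i => conj (f i))

@[simp]
theorem antiConstr_basis (b : Basis I ℂ M) (f : I → ℂ) (i : I) : b.antiConstr f (b i) = f i := by
  simp [antiConstr]

end Module.Basis

section KernelMap

variable {M N P I J : Type} [AddCommGroup M] [Module ℂ M] [AddCommGroup N] [Module ℂ N]
  [AddCommGroup P] [Module ℂ P]

def kernelMap (μ : M →ₗ[ℂ] N →ₗ⋆[ℂ] P) : (P →ₗ⋆[ℂ] ℂ) →ₗ[ℂ] N →ₗ[ℂ] M →ₗ⋆[ℂ] ℂ where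
  toFun u := (μ.compr₂ₛₗ u).flip
  map_add' _ _ := rfl
  map_smul' _ _ := rfl

@[simp]
theorem kernelMap_apply (μ : M →ₗ[ℂ] N →ₗ⋆[ℂ] P) (u : P →ₗ⋆[ℂ] ℂ) (φ : N) (ψ : M) :
    kernelMap μ u φ ψ = u (μ ψ φ) := rfl

variable (bM : Module.Basis I ℂ M) (bN : Module.Basis J ℂ N) (bP : Module.Basis (I × J) ℂ P)

theorem kernelMap_bijective {μ : M →ₗ[ℂ] N →ₗ⋆[ℂ] P} (hμ : ∀ ij, bP ij = μ (bM ij.1) (bN ij.2)) :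
    Function.Bijective (kernelMap μ) := by
  refine ⟨fun u v huv => bP.ext fun ij => ?_, fun T => ?_⟩
  · simpa only [hμ, kernelMap_apply] using congr($huv (bN ij.2) (bM ij.1))
  · refine ⟨bP.antiConstr fun ij => T (bN ij.2) (bM ij.1), bN.ext fun j => bM.ext fun i => ?_⟩
    rw [kernelMap_apply, ← hμ (i, j), Module.Basis.antiConstr_basis]

end KernelMap

def IsAntiAlgHom.toLinearMap {A AC : Type} [CommRing A] [Algebra ℂ A] [CommRing AC] [Algebra ℂ AC]
    {m : A → AC} (hm : IsAntiAlgHom m) : A →ₗ⋆[ℂ] AC where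
  toFun := m
  map_add' := hm.1
  map_smul' := hm.2.1

/-- `p` is `φ ↦ φ₊` and `m` is `φ ↦ φ₋`; `SV_ℂ ≅ S(V₊) ⊗ S(V₋)` is expressed by the product
basis `bC`. -/
theorem kernel_theorem_general {A AC I : Type}
    [CommRing A] [Algebra ℂ A] [CommRing AC] [Algebra ℂ AC]
    (p : A →ₐ[ℂ] AC) (m : A → AC) (hm : IsAntiAlgHom m)
    (bA : Module.Basis I ℂ A) (bC : Module.Basis (I × I) ℂ AC)
    (hb : ∀ ij : I × I, bC ij = p (bA ij.1) * m (bA ij.2)) :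
    ∃ e : (AC →ₗ⋆[ℂ] ℂ) ≃ₗ[ℂ] (A →ₗ[ℂ] (A →ₗ⋆[ℂ] ℂ)),
      ∀ (u : AC →ₗ⋆[ℂ] ℂ) (φ ψ : A), e u φ ψ = u (p ψ * m φ) := by
  let μ : A →ₗ[ℂ] A →ₗ⋆[ℂ] AC := (LinearMap.mul ℂ AC ∘ₗ p.toLinearMap).compl₂ hm.toLinearMap
  exact ⟨.ofBijective (kernelMap μ) (kernelMap_bijective bA bA bC hb), fun _ _ _ => rfl⟩

/-- Kernel theorem: `u ↦ U`, `[Uφ](ψ) = u(ψ₊φ₋)`, is a linear isomorphism from the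
full antidual `S(V_ℂ)'` onto `Hom(SV, SV')`.  Here `A` is the symmetric algebra of
`V`, `AC` that of `V_ℂ`, `p : φ ↦ φ₊` and `m : φ ↦ φ₋` the plus/minus algebra
morphisms; that `SV_ℂ ≅ S(V₊) ⊗ S(V₋)` is expressed by the product basis. -/
theorem kernel_theorem {V A AC I : Type}
    [NormedAddCommGroup V] [InnerProductSpace ℂ V] [CompleteSpace V]
    [CommRing A] [Algebra ℂ A] [CommRing AC] [Algebra ℂ AC]
    (ι : V →ₗ[ℂ] A) (hA : IsSymmAlg ι)
    (p : A →ₐ[ℂ] AC) (m : A → AC) (hm : IsAntiAlgHom m)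
    (bA : Module.Basis I ℂ A) (bC : Module.Basis (I × I) ℂ AC)
    (hb : ∀ ij : I × I, bC ij = p (bA ij.1) * m (bA ij.2)) :
    ∃ e : (AC →ₗ⋆[ℂ] ℂ) ≃ₗ[ℂ] (A →ₗ[ℂ] (A →ₗ⋆[ℂ] ℂ)),
      ∀ (u : AC →ₗ⋆[ℂ] ℂ) (φ ψ : A), e u φ ψ = u (p ψ * m φ) :=
  kernel_theorem_general p m hm bA bC hb
end
end

section
/- Let g be a real-linear symplectic automorphism of the complex Hilbert space V with complex-linear part C_g = (g − JgJ)/2 and antilinear part A_g = (g + JgJ)/2. Then C_g is invertible, and the antilinear operator Z_g = C_g⁻¹A_g is symmetric (⟨y|Z_g x⟩ = ⟨x|Z_g y⟩ for all x, y) with operator norm strictly less than 1. -/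
open scoped ComplexConjugate

noncomputable section

/-!
Split a real-linear map as `T = C + A` with `C = (T - JTJ)/2` complex-linear and
`A = (T + JTJ)/2` antilinear, `J = I • ·`. Preserving `Im ⟨·,·⟩` says that `g⁻¹` is the
`Im ⟨·,·⟩`-adjoint of `g`; on parts this makes `C_{g⁻¹}` the Hilbert adjoint of `C_g` and
`⟨A_{g⁻¹} x, y⟩ = -⟨A_g y, x⟩`. Splitting `g⁻¹ g = 1` and `g g⁻¹ = 1` into parts then gives
`‖C_g x‖² = ‖x‖² + ‖A_g x‖²`, `⟨C_g x, A_g y⟩ = ⟨C_g y, A_g x⟩` and `A_g C_{g⁻¹} = -C_g A_{g⁻¹}`.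
So `C_g` is bounded below with injective adjoint, hence invertible, and `Z = C_g⁻¹ A_g` sends
`C_{g⁻¹} p` to `-A_{g⁻¹} p`. Symmetry of `Z` is the second identity for `g⁻¹`, and
`‖Z x‖² = ‖x‖² - ‖p‖² ≤ (1 - (1 + ‖C_{g⁻¹}‖²)⁻¹) ‖x‖²` for `x = C_{g⁻¹} p` gives `‖Z‖ < 1`.
-/

open scoped InnerProductSpace
open Complex (I)

section ComplexParts

variable {V W : Type*} [NormedAddCommGroup V] [InnerProductSpace ℂ V]
  [NormedAddCommGroup W] [InnerProductSpace ℂ W]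

theorem smul_eq_re_smul_add_im_smul_I (c : ℂ) (x : V) : c • x = c.re • x + c.im • I • x := by
  conv_lhs => rw [← c.re_add_im]
  rw [add_smul, mul_smul, Complex.coe_smul, Complex.coe_smul]

theorem I_smul_I_smul (x : V) : I • I • x = -x := by
  rw [smul_smul, Complex.I_mul_I, neg_one_smul]

theorem re_inner_eq_im_inner_I_smul (u v : V) : (⟪u, v⟫_ℂ).re = (⟪u, I • v⟫_ℂ).im := by
  simp

theorem im_inner_I_smul_left (u v : V) : (⟪I • u, v⟫_ℂ).im = -(⟪u, I • v⟫_ℂ).im := by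
  simp

theorem im_inner_real_smul_left (r : ℝ) (u v : V) : (⟪r • u, v⟫_ℂ).im = r * (⟪u, v⟫_ℂ).im := by
  simpa [← Complex.coe_smul] using mul_comm _ _

theorem im_inner_real_smul_right (r : ℝ) (u v : V) : (⟪u, r • v⟫_ℂ).im = r * (⟪u, v⟫_ℂ).im := by
  simp [← Complex.coe_smul]

namespace ContinuousLinearMap

theorem map_smul_of_map_I_smul (f : V →L[ℝ] W) (hf : ∀ x, f (I • x) = I • f x) (c : ℂ) (x : V) :
    f (c • x) = c • f x := by
  rw [smul_eq_re_smul_add_im_smul_I, map_add, map_smul, map_smul, hf,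
    smul_eq_re_smul_add_im_smul_I c (f x)]

theorem map_smul_of_map_I_smul_eq_neg (f : V →L[ℝ] W) (hf : ∀ x, f (I • x) = -(I • f x))
    (c : ℂ) (x : V) : f (c • x) = conj c • f x := by
  rw [smul_eq_re_smul_add_im_smul_I, map_add, map_smul, map_smul, hf,
    smul_eq_re_smul_add_im_smul_I (conj c) (f x), Complex.conj_re, Complex.conj_im, neg_smul,
    smul_neg]

def ofMapISmul (f : V →L[ℝ] W) (hf : ∀ x, f (I • x) = I • f x) : V →L[ℂ] W where
  toFun := f
  map_add' := f.map_add
  map_smul' := f.map_smul_of_map_I_smul hf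
  cont := f.continuous

variable (T : V →L[ℝ] W)

def linPart : V →L[ℂ] W :=
  ofMapISmul ((2 : ℝ)⁻¹ • (T - lsmul ℝ ℂ I ∘L T ∘L lsmul ℝ ℂ I)) fun x => by
    simp only [smul_apply, sub_apply, comp_apply, lsmul_apply, I_smul_I_smul, map_neg, smul_sub,
      smul_comm I ((2 : ℝ)⁻¹)]
    module

def antilinPart : V →L[ℝ] W := (2 : ℝ)⁻¹ • (T + lsmul ℝ ℂ I ∘L T ∘L lsmul ℝ ℂ I)

theorem linPart_apply (x : V) : T.linPart x = (2 : ℝ)⁻¹ • (T x - I • T (I • x)) := rfl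

theorem antilinPart_apply (x : V) : T.antilinPart x = (2 : ℝ)⁻¹ • (T x + I • T (I • x)) := rfl

theorem antilinPart_map_I_smul (x : V) : T.antilinPart (I • x) = -(I • T.antilinPart x) := by
  simp only [antilinPart_apply, I_smul_I_smul, map_neg, smul_add, smul_comm I ((2 : ℝ)⁻¹)]
  module

theorem antilinPart_map_smul (c : ℂ) (x : V) :
    T.antilinPart (c • x) = conj c • T.antilinPart x :=
  T.antilinPart.map_smul_of_map_I_smul_eq_neg T.antilinPart_map_I_smul c x

section Comp

variable {U : Type*} [NormedAddCommGroup U] [InnerProductSpace ℂ U] (S : W →L[ℝ] U)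

theorem linPart_comp_apply (x : V) :
    (S ∘L T).linPart x = S.linPart (T.linPart x) + S.antilinPart (T.antilinPart x) := by
  simp only [linPart_apply, antilinPart_apply, comp_apply, map_smul, map_add, map_sub, map_neg,
    smul_add, smul_sub, smul_comm I ((2 : ℝ)⁻¹), I_smul_I_smul]
  module

theorem antilinPart_comp_apply (x : V) :
    (S ∘L T).antilinPart x = S.linPart (T.antilinPart x) + S.antilinPart (T.linPart x) := by
  simp only [linPart_apply, antilinPart_apply, comp_apply, map_smul, map_add, map_sub, map_neg,
    smul_add, smul_sub, smul_comm I ((2 : ℝ)⁻¹), I_smul_I_smul]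
  module

end Comp

theorem linPart_id_apply (x : V) : (ContinuousLinearMap.id ℝ V).linPart x = x := by
  rw [linPart_apply, id_apply, id_apply, I_smul_I_smul]
  module

theorem antilinPart_id_apply (x : V) : (ContinuousLinearMap.id ℝ V).antilinPart x = 0 := by
  rw [antilinPart_apply, id_apply, id_apply, I_smul_I_smul, add_neg_cancel, smul_zero]

theorem antilinPart_linPart_of_comp_eq_id {T S : V →L[ℝ] V}
    (hTS : T ∘L S = ContinuousLinearMap.id ℝ V) (x : V) :
    T.antilinPart (S.linPart x) = -T.linPart (S.antilinPart x) := by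
  refine eq_neg_of_add_eq_zero_right ?_
  rw [← antilinPart_comp_apply, hTS, antilinPart_id_apply]

section ImInnerAdjoint

variable {T} {S : W →L[ℝ] V} (h : ∀ x y, (⟪T x, y⟫_ℂ).im = (⟪x, S y⟫_ℂ).im)
include h

theorem im_inner_linPart_left (x : V) (y : W) :
    (⟪T.linPart x, y⟫_ℂ).im = (⟪x, S.linPart y⟫_ℂ).im := by
  have hJ : (⟪I • T (I • x), y⟫_ℂ).im = (⟪x, I • S (I • y)⟫_ℂ).im := by
    rw [im_inner_I_smul_left, h, im_inner_I_smul_left, neg_neg]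
  rw [linPart_apply, linPart_apply, im_inner_real_smul_left, im_inner_real_smul_right,
    inner_sub_left, inner_sub_right, Complex.sub_im, Complex.sub_im, h, hJ]

theorem im_inner_antilinPart_left (x : V) (y : W) :
    (⟪T.antilinPart x, y⟫_ℂ).im = (⟪x, S.antilinPart y⟫_ℂ).im := by
  have hJ : (⟪I • T (I • x), y⟫_ℂ).im = (⟪x, I • S (I • y)⟫_ℂ).im := by
    rw [im_inner_I_smul_left, h, im_inner_I_smul_left, neg_neg]
  rw [antilinPart_apply, antilinPart_apply, im_inner_real_smul_left, im_inner_real_smul_right,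
    inner_add_left, inner_add_right, Complex.add_im, Complex.add_im, h, hJ]

theorem inner_linPart_left (x : V) (y : W) : ⟪T.linPart x, y⟫_ℂ = ⟪x, S.linPart y⟫_ℂ := by
  apply Complex.ext
  · rw [re_inner_eq_im_inner_I_smul, re_inner_eq_im_inner_I_smul, ← map_smul,
      im_inner_linPart_left h]
  · exact im_inner_linPart_left h x y

theorem inner_antilinPart_left (x : V) (y : W) :
    ⟪T.antilinPart x, y⟫_ℂ = -⟪S.antilinPart y, x⟫_ℂ := by
  rw [← inner_conj_symm (S.antilinPart y) x]
  apply Complex.ext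
  · rw [re_inner_eq_im_inner_I_smul, im_inner_antilinPart_left h, antilinPart_map_I_smul,
      inner_neg_right, Complex.neg_re, Complex.conj_re, Complex.neg_im, re_inner_eq_im_inner_I_smul]
  · rw [im_inner_antilinPart_left h, Complex.neg_im, Complex.conj_im, neg_neg]

end ImInnerAdjoint

end ContinuousLinearMap

end ComplexParts

theorem ContinuousLinearMap.surjective_of_norm_le_of_injective_adjoint {𝕜 E F : Type*} [RCLike 𝕜]
    [NormedAddCommGroup E] [InnerProductSpace 𝕜 E] [CompleteSpace E]
    [NormedAddCommGroup F] [InnerProductSpace 𝕜 F] [CompleteSpace F]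
    (f : E →L[𝕜] F) (hf : ∀ x, ‖x‖ ≤ ‖f x‖) (hf' : Function.Injective (adjoint f)) :
    Function.Surjective f := by
  have hclosed : IsClosed (f.range : Set F) := by
    rw [LinearMap.coe_range]
    exact (f.antilipschitz_of_bound (K := 1) (by simpa using hf)).isClosed_range
      f.uniformContinuous
  have hdense : f.range.topologicalClosure = ⊤ := by
    rw [Submodule.topologicalClosure_eq_top_iff, orthogonal_range, LinearMap.ker_eq_bot.2 hf']
  exact LinearMap.range_eq_top.1 (by rw [← hdense, hclosed.submodule_topologicalClosure_eq])

theorem ContinuousLinearMap.opNorm_lt_one_of_sq_le {E F : Type*} [SeminormedAddCommGroup E]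
    [NormedSpace ℝ E] [SeminormedAddCommGroup F] [NormedSpace ℝ F] (f : E →L[ℝ] F) {δ : ℝ}
    (hδ : 0 < δ) (hδ₁ : δ ≤ 1) (hf : ∀ x, ‖f x‖ ^ 2 ≤ (1 - δ) * ‖x‖ ^ 2) : ‖f‖ < 1 := by
  refine (f.opNorm_le_bound (M := √(1 - δ)) (Real.sqrt_nonneg _) fun x => ?_).trans_lt ?_
  · rw [← Real.sqrt_sq (norm_nonneg x), ← Real.sqrt_mul (by linarith)]
    exact Real.le_sqrt_of_sq_le (hf x)
  · rw [Real.sqrt_lt' one_pos]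
    linarith

namespace ContinuousLinearMap

variable {V : Type*} [NormedAddCommGroup V] [InnerProductSpace ℂ V]
  {T S : V →L[ℝ] V} (hT : ∀ x y, (⟪T x, T y⟫_ℂ).im = (⟪x, y⟫_ℂ).im)
  (hST : S ∘L T = ContinuousLinearMap.id ℝ V) (hTS : T ∘L S = ContinuousLinearMap.id ℝ V)
include hT hTS

theorem im_inner_left_of_comp_eq_id (x y : V) : (⟪S x, y⟫_ℂ).im = (⟪x, T y⟫_ℂ).im := by
  rw [← hT, ← comp_apply, hTS, id_apply]

theorem im_inner_map_map_of_comp_eq_id (x y : V) : (⟪S x, S y⟫_ℂ).im = (⟪x, y⟫_ℂ).im := by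
  rw [← hT, ← comp_apply, ← comp_apply, hTS, id_apply, id_apply]

include hST

theorem inner_linPart_sub_inner_antilinPart (x y : V) :
    ⟪T.linPart x, T.linPart y⟫_ℂ - ⟪T.antilinPart y, T.antilinPart x⟫_ℂ = ⟪x, y⟫_ℂ := by
  have hω := im_inner_left_of_comp_eq_id hT hTS
  calc _ = ⟪S.linPart (T.linPart x), y⟫_ℂ + ⟪S.antilinPart (T.antilinPart x), y⟫_ℂ := by
        rw [inner_linPart_left hω, inner_antilinPart_left hω, sub_eq_add_neg]
    _ = ⟪x, y⟫_ℂ := by rw [← inner_add_left, ← linPart_comp_apply, hST, linPart_id_apply]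

theorem norm_sq_linPart (x : V) : ‖T.linPart x‖ ^ 2 = ‖x‖ ^ 2 + ‖T.antilinPart x‖ ^ 2 := by
  have h := congrArg Complex.re (inner_linPart_sub_inner_antilinPart hT hST hTS x x)
  have hre (u : V) : (⟪u, u⟫_ℂ).re = ‖u‖ ^ 2 := inner_self_eq_norm_sq (𝕜 := ℂ) u
  rw [Complex.sub_re, hre, hre, hre] at h
  linarith

theorem norm_le_norm_linPart (x : V) : ‖x‖ ≤ ‖T.linPart x‖ := by
  refine le_of_sq_le_sq ?_ (norm_nonneg _)
  rw [norm_sq_linPart hT hST hTS]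
  exact le_add_of_nonneg_right (sq_nonneg _)

theorem injective_linPart : Function.Injective T.linPart := by
  intro x y hxy
  have h := norm_le_norm_linPart hT hST hTS (x - y)
  rw [map_sub, hxy, sub_self, norm_zero] at h
  exact sub_eq_zero.1 (norm_le_zero_iff.1 h)

theorem inner_linPart_antilinPart_comm (x y : V) :
    ⟪T.linPart x, T.antilinPart y⟫_ℂ = ⟪T.linPart y, T.antilinPart x⟫_ℂ := by
  have hω := im_inner_left_of_comp_eq_id hT hTS
  have h : ⟪T.antilinPart y, T.linPart x⟫_ℂ - ⟪T.antilinPart x, T.linPart y⟫_ℂ = 0 := by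
    calc _ = ⟪S.linPart (T.antilinPart y), x⟫_ℂ + ⟪S.antilinPart (T.linPart y), x⟫_ℂ := by
          rw [inner_linPart_left hω, inner_antilinPart_left hω, sub_eq_add_neg]
      _ = 0 := by
          rw [← inner_add_left, ← antilinPart_comp_apply, hST, antilinPart_id_apply,
            inner_zero_left]
  rw [← inner_conj_symm, sub_eq_zero.1 h, inner_conj_symm]

section Complete

variable [CompleteSpace V]

theorem bijective_linPart : Function.Bijective T.linPart := by
  have hS := im_inner_map_map_of_comp_eq_id hT hTS
  have hadj : S.linPart = adjoint T.linPart :=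
    (eq_adjoint_iff _ _).2 (inner_linPart_left (im_inner_left_of_comp_eq_id hT hTS))
  refine ⟨injective_linPart hT hST hTS, T.linPart.surjective_of_norm_le_of_injective_adjoint
    (norm_le_norm_linPart hT hST hTS) ?_⟩
  rw [← hadj]
  exact injective_linPart hS hTS hST

theorem exists_linPart_apply_eq_antilinPart :
    ∃ Z : V →L[ℝ] V, ∀ x, T.linPart (Z x) = T.antilinPart x := by
  have h := bijective_linPart hT hST hTS
  let e := ContinuousLinearEquiv.ofBijective T.linPart (LinearMap.ker_eq_bot.2 h.1)
    (LinearMap.range_eq_top.2 h.2)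
  exact ⟨((e.symm : V →L[ℂ] V).restrictScalars ℝ) ∘L T.antilinPart, fun x => e.apply_symm_apply _⟩

end Complete

variable {Z : V →L[ℝ] V} (hZ : ∀ x, T.linPart (Z x) = T.antilinPart x)
include hZ

theorem map_smul_of_linPart_apply_eq (c : ℂ) (x : V) : Z (c • x) = conj c • Z x := by
  apply injective_linPart hT hST hTS
  rw [hZ, antilinPart_map_smul, map_smul, hZ]

theorem apply_linPart_of_linPart_apply_eq (p : V) : Z (S.linPart p) = -S.antilinPart p := by
  apply injective_linPart hT hST hTS
  rw [hZ, antilinPart_linPart_of_comp_eq_id hTS, map_neg]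

theorem inner_comm_of_linPart_apply_eq [CompleteSpace V] (x y : V) :
    ⟪y, Z x⟫_ℂ = ⟪x, Z y⟫_ℂ := by
  have hS := im_inner_map_map_of_comp_eq_id hT hTS
  obtain ⟨p, rfl⟩ := (bijective_linPart hS hTS hST).2 x
  obtain ⟨q, rfl⟩ := (bijective_linPart hS hTS hST).2 y
  rw [apply_linPart_of_linPart_apply_eq hT hST hTS hZ,
    apply_linPart_of_linPart_apply_eq hT hST hTS hZ, inner_neg_right, inner_neg_right,
    inner_linPart_antilinPart_comm hS hTS hST]

theorem norm_lt_one_of_linPart_apply_eq [CompleteSpace V] : ‖Z‖ < 1 := by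
  have hS := im_inner_map_map_of_comp_eq_id hT hTS
  set K := ‖S.linPart‖
  have hK : 0 < 1 + K ^ 2 := by positivity
  refine Z.opNorm_lt_one_of_sq_le (δ := (1 + K ^ 2)⁻¹) (inv_pos.2 hK)
    (inv_le_one_of_one_le₀ (le_add_of_nonneg_right (sq_nonneg K))) fun x => ?_
  obtain ⟨p, rfl⟩ := (bijective_linPart hS hTS hST).2 x
  have hp := norm_sq_linPart hS hTS hST p
  have hbound : ‖S.linPart p‖ ^ 2 ≤ (1 + K ^ 2) * ‖p‖ ^ 2 := by
    have := pow_le_pow_left₀ (norm_nonneg _) (S.linPart.le_opNorm p) 2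
    nlinarith [sq_nonneg ‖p‖]
  have hδ : (1 + K ^ 2)⁻¹ * ‖S.linPart p‖ ^ 2 ≤ ‖p‖ ^ 2 := by
    rwa [inv_mul_le_iff₀ hK]
  rw [apply_linPart_of_linPart_apply_eq hT hST hTS hZ, norm_neg]
  linarith

end ContinuousLinearMap

open ContinuousLinearMap

/-- For a real-linear symplectic automorphism `g` of the complex Hilbert space `V`,
with complex-linear part `C_g = (g − JgJ)/2` and antilinear part `A_g = (g + JgJ)/2`:
`C_g` is invertible, and `Z_g = C_g⁻¹A_g` is a symmetric antilinear operator of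
operator norm strictly less than `1`. -/
theorem symplectic_parts {V : Type}
    [NormedAddCommGroup V] [InnerProductSpace ℂ V] [CompleteSpace V]
    (g : V ≃L[ℝ] V)
    (hg : ∀ x y : V, (inner ℂ (g x) (g y) : ℂ).im = (inner ℂ x y : ℂ).im)
    (Cg Ag : V → V)
    (hCg : ∀ x : V, Cg x = (2 : ℝ)⁻¹ • (g x - Complex.I • g (Complex.I • x)))
    (hAg : ∀ x : V, Ag x = (2 : ℝ)⁻¹ • (g x + Complex.I • g (Complex.I • x))) :
    Function.Bijective Cg ∧
    ∃ Zg : V →L[ℝ] V,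
      (∀ x : V, Cg (Zg x) = Ag x) ∧
      (∀ (c : ℂ) (x : V), Zg (c • x) = conj c • Zg x) ∧
      (∀ x y : V, (inner ℂ y (Zg x) : ℂ) = inner ℂ x (Zg y)) ∧
      ‖Zg‖ < 1 := by
  have hT : ∀ x y, (⟪(g : V →L[ℝ] V) x, (g : V →L[ℝ] V) y⟫_ℂ).im = (⟪x, y⟫_ℂ).im := hg
  have hST := g.coe_symm_comp_coe
  have hTS := g.coe_comp_coe_symm
  obtain rfl : Cg = (g : V →L[ℝ] V).linPart := funext hCg
  obtain rfl : Ag = (g : V →L[ℝ] V).antilinPart := funext hAg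
  obtain ⟨Z, hZ⟩ := exists_linPart_apply_eq_antilinPart hT hST hTS
  exact ⟨bijective_linPart hT hST hTS, Z, hZ, map_smul_of_linPart_apply_eq hT hST hTS hZ,
    inner_comm_of_linPart_apply_eq hT hST hTS hZ, norm_lt_one_of_linPart_apply_eq hT hST hTS hZ⟩
end
end
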